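/- Let ε₁ ∈ [0, 1/2) and set a = exp(-2t(1/2-ε₁)²). If t ≥ (log 2)/(2(1/2-ε₁)²), then a ≤ 1/2, and consequently for independent {0,1}-valued random variables Z₁,…,Z_t each with mean 1-ε₁, the probability that (1/t)·Σⱼ Zⱼ ≥ 1/2 is at least exp(-a(a+1)). -/

import Mathlib

/-!
Hoeffding's inequality for the `[0, 1]`-valued votes `Z j` bounds the probability that their sum
falls to `t / 2 = t (1 - ε₁) - t (1/2 - ε₁)` by `a = exp (-2 t (1/2 - ε₁)²)`, so the majority is
correct with probability at least `1 - a`. The condition on `t` is exactly `a ≤ 1/2`, and on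
`[0, 1/2]` the elementary bound `1 - a ≥ exp (-a (a + 1))` follows from
`exp y ≥ 1 + y + y² / 2` at `y = a (a + 1)`.
-/

open MeasureTheory ProbabilityTheory Real
open scoped NNReal Finset

namespace Real

lemma exp_neg_le_half_of_log_two_le {x : ℝ} (hx : log 2 ≤ x) : exp (-x) ≤ 1 / 2 :=
  calc exp (-x) ≤ exp (-log 2) := exp_le_exp.2 (neg_le_neg hx)
    _ = 1 / 2 := by rw [exp_neg, exp_log two_pos, one_div]

lemma exp_neg_mul_add_one_le_one_sub {a : ℝ} (h0 : 0 ≤ a) (h2 : a ≤ 1 / 2) :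
    exp (-(a * (a + 1))) ≤ 1 - a := by
  set y := a * (a + 1)
  have hquad : 1 + y + y ^ 2 / 2 ≤ exp y := quadratic_le_exp_of_nonneg (by positivity)
  -- `(1 - a) (1 + y + y² / 2) - 1 = a² (1 - a - a² - a³) / 2`
  have hcubic : 0 ≤ 1 - a - a ^ 2 - a ^ 3 := by nlinarith
  have hprod : 1 ≤ (1 - a) * (1 + y + y ^ 2 / 2) := by nlinarith [mul_nonneg (sq_nonneg a) hcubic]
  rw [exp_neg, inv_le_iff_one_le_mul₀' (exp_pos y)]
  calc 1 ≤ (1 - a) * (1 + y + y ^ 2 / 2) := hprod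
    _ ≤ exp y * (1 - a) := by rw [mul_comm]; gcongr; linarith

end Real

namespace ProbabilityTheory

variable {Ω ι : Type*} [MeasurableSpace Ω] {μ : Measure Ω} [IsProbabilityMeasure μ]

/-- **Hoeffding's inequality**, lower tail. -/
lemma measureReal_sum_le_sum_integral_sub_le {X : ι → Ω → ℝ} (hind : iIndepFun X μ)
    (hm : ∀ i, AEMeasurable (X i) μ) {a b : ℝ} (hb : ∀ i, ∀ᵐ ω ∂μ, X i ω ∈ Set.Icc a b)
    (s : Finset ι) {ε : ℝ} (hε : 0 ≤ ε) :
    μ.real {ω | ∑ i ∈ s, X i ω ≤ ∑ i ∈ s, μ[X i] - ε}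
      ≤ exp (-2 * ε ^ 2 / (#s * (b - a) ^ 2)) := by
  have hsubG : ∀ i ∈ s,
      HasSubgaussianMGF (fun ω ↦ μ[X i] - X i ω) ((‖b - a‖₊ / 2) ^ 2) μ := fun i _ ↦ by
    convert (hasSubgaussianMGF_of_mem_Icc (hm i) (hb i)).neg using 1
    ext ω
    simp
  have hind' : iIndepFun (fun i ω ↦ μ[X i] - X i ω) μ :=
    hind.comp (fun i y ↦ ∫ ω, X i ω ∂μ - y) fun _ ↦ measurable_const.sub measurable_id
  convert HasSubgaussianMGF.measure_sum_ge_le_of_iIndepFun hind' hsubG hε using 1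
  · congr with ω
    simp only [Finset.sum_sub_distrib]
    constructor <;> intro h <;> linarith
  · push_cast [Finset.sum_const, nsmul_eq_mul, coe_nnnorm, norm_eq_abs]
    rw [div_pow, sq_abs, show 2 * (#s * ((b - a) ^ 2 / 2 ^ 2)) = #s * (b - a) ^ 2 / 2 by ring,
      div_div_eq_mul_div]
    congr 1
    ring

lemma measureReal_sum_le_half_card_le [Fintype ι] {X : ι → Ω → ℝ} (hind : iIndepFun X μ)
    (hm : ∀ i, AEMeasurable (X i) μ) (hb : ∀ i, ∀ᵐ ω ∂μ, X i ω ∈ Set.Icc (0 : ℝ) 1) {p : ℝ}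
    (hmean : ∀ i, μ[X i] = p) (hp : 1 / 2 ≤ p) :
    μ.real {ω | ∑ i, X i ω ≤ Fintype.card ι / 2}
      ≤ exp (-2 * Fintype.card ι * (p - 1 / 2) ^ 2) := by
  have hoeff := measureReal_sum_le_sum_integral_sub_le hind hm hb Finset.univ
    (ε := Fintype.card ι * (p - 1 / 2)) (mul_nonneg (Nat.cast_nonneg _) (sub_nonneg.2 hp))
  simp only [hmean, Finset.sum_const, Finset.card_univ, nsmul_eq_mul, sub_zero, one_pow,
    mul_one] at hoeff
  rw [show (Fintype.card ι : ℝ) * p - Fintype.card ι * (p - 1 / 2) = Fintype.card ι / 2 by ring]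
    at hoeff
  refine hoeff.trans_eq (congrArg exp ?_)
  rcases eq_or_ne (Fintype.card ι : ℝ) 0 with hn | hn
  · simp [hn]
  · field_simp

end ProbabilityTheory

/-- If `t ≥ log 2 / (2(1/2-ε₁)²)`, then `a = exp(-2t(1/2-ε₁)²) ≤ 1/2`, and the
majority vote of independent `{0,1}`-valued variables with mean `1-ε₁` reaches
at least `1/2` with probability at least `exp(-a(a+1))`. -/
theorem stmt2 {Ω : Type*} [MeasureSpace Ω] [IsProbabilityMeasure (ℙ : Measure Ω)]
    (ε₁ : ℝ) (hε : ε₁ ∈ Set.Ico (0 : ℝ) (1/2))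
    (t : ℕ) (ht : (t : ℝ) ≥ Real.log 2 / (2 * (1/2 - ε₁)^2))
    (a : ℝ) (ha : a = Real.exp (-2 * t * (1/2 - ε₁)^2))
    (Z : Fin t → Ω → ℝ)
    (hmeas : ∀ j, Measurable (Z j))
    (hind : iIndepFun Z ℙ)
    (hrange : ∀ j ω, Z j ω = 0 ∨ Z j ω = 1)
    (hmean : ∀ j, ∫ ω, Z j ω ∂ℙ = 1 - ε₁) :
    a ≤ 1/2 ∧
    (ℙ {ω | (1/2 : ℝ) ≤ (1 / (t : ℝ)) * ∑ j, Z j ω}).toReal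
      ≥ Real.exp (-(a * (a + 1))) := by
  have hδ : 0 < 1 / 2 - ε₁ := sub_pos.2 hε.2
  have hlog : log 2 ≤ 2 * t * (1 / 2 - ε₁) ^ 2 := by
    rw [ge_iff_le, div_le_iff₀ (by positivity)] at ht
    linarith
  have ht0 : 0 < (t : ℝ) := by
    by_contra! h
    nlinarith [log_pos one_lt_two]
  have ha_half : a ≤ 1 / 2 := by
    simpa [ha, neg_mul] using exp_neg_le_half_of_log_two_le hlog
  refine ⟨ha_half, ?_⟩
  set B := {ω | ∑ j, Z j ω ≤ t / 2}
  have hB : (ℙ : Measure Ω).real B ≤ a := by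
    have hZ : ∀ j, ∀ᵐ ω ∂ℙ, Z j ω ∈ Set.Icc (0 : ℝ) 1 := fun j ↦
      ae_of_all _ fun ω ↦ by rcases hrange j ω with h | h <;> simp [h]
    have hoeff := measureReal_sum_le_half_card_le hind (fun j ↦ (hmeas j).aemeasurable) hZ hmean
      (by linarith)
    rwa [Fintype.card_fin, show 1 - ε₁ - 1 / 2 = 1 / 2 - ε₁ by ring, ← ha] at hoeff
  have hBc : Bᶜ ⊆ {ω | (1 / 2 : ℝ) ≤ (1 / (t : ℝ)) * ∑ j, Z j ω} := fun ω hω ↦ by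
    rw [Set.mem_compl_iff, Set.notMem_ofPred_iff, not_le] at hω
    rw [Set.mem_ofPred_eq, one_div_mul_eq_div, le_div_iff₀ ht0]
    linarith
  rw [ge_iff_le, ← measureReal_def]
  calc exp (-(a * (a + 1))) ≤ 1 - a :=
        exp_neg_mul_add_one_le_one_sub (ha ▸ (exp_pos _).le) ha_half
    _ ≤ 1 - (ℙ : Measure Ω).real B := by linarith
    _ = (ℙ : Measure Ω).real Bᶜ :=
      (probReal_compl_eq_one_sub (measurableSet_le (by fun_prop) measurable_const)).symm
    _ ≤ _ := measureReal_mono hBc
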